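/- Let (B_t)_{t≥t₁} be a nonnegative real sequence, μ > 0, C > 0, α ∈ (0,1], and (η_t) nonnegative with η_t ≤ 1/μ for t ≥ t₁, lim_{t→∞} η_t = 0, ∑_{t=1}^∞ η_t = ∞, and ∑_{t=1}^∞ η_t^{1+α} < ∞. If B_{t+1} ≤ (1 - μ η_t) B_t + C η_t^{1+α} for all t ≥ t₁, then lim_{t→∞} B_t = 0. -/

import Mathlib

/-!
Unrolling the recursion from a time `T₀` past which it holds gives
`B T ≤ B T₀ · ∏_{T₀ ≤ t < T} (1 - μ η_t) + C ∑_{T₀ ≤ t < T} η_t^{1+α}`.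
The product is at most `exp (-μ ∑_{T₀ ≤ t < T} η_t)`, which tends to `0` as `T → ∞` because
`∑ η_t = ∞`, while the sum is bounded by the tail of the convergent series `∑ η_t^{1+α}`,
which is small once `T₀` is large.
-/

open Real Finset Filter

theorem prod_one_sub_le_exp_neg_sum {ι : Type*} {s : Finset ι} {a : ι → ℝ}
    (ha : ∀ i ∈ s, a i ≤ 1) : ∏ i ∈ s, (1 - a i) ≤ exp (-∑ i ∈ s, a i) := by
  rw [← sum_neg_distrib, exp_sum]
  exact prod_le_prod (fun i hi => sub_nonneg.2 (ha i hi)) fun i _ => one_sub_le_exp_neg _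

theorem sum_Ico_le_tsum_nat_add {c : ℕ → ℝ} (hc : ∀ t, 0 ≤ c t) (hcs : Summable c) (m n : ℕ) :
    ∑ t ∈ Ico m n, c t ≤ ∑' k, c (k + m) := by
  rw [sum_Ico_eq_sum_range]
  simp_rw [add_comm m]
  exact ((summable_nat_add_iff m).2 hcs).sum_le_tsum _ fun k _ => hc _

theorem tendsto_sum_Ico_atTop {a : ℕ → ℝ} (ha : Tendsto (fun n => ∑ t ∈ range n, a t) atTop atTop)
    (m : ℕ) : Tendsto (fun n => ∑ t ∈ Ico m n, a t) atTop atTop := by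
  refine (tendsto_atTop_add_const_right _ (-∑ t ∈ range m, a t) ha).congr' ?_
  filter_upwards [eventually_ge_atTop m] with n hn
  rw [sum_Ico_eq_sub _ hn, sub_eq_add_neg]

section Recursion

variable {a b c : ℕ → ℝ} {T₀ : ℕ}

theorem le_mul_prod_add_sum_of_le_one_sub_mul_add (ha : ∀ t, 0 ≤ a t) (hc : ∀ t, 0 ≤ c t)
    (ha1 : ∀ t, T₀ ≤ t → a t ≤ 1) (hrec : ∀ t, T₀ ≤ t → b (t + 1) ≤ (1 - a t) * b t + c t)
    {T : ℕ} (hT : T₀ ≤ T) :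
    b T ≤ b T₀ * ∏ t ∈ Ico T₀ T, (1 - a t) + ∑ t ∈ Ico T₀ T, c t := by
  induction T, hT using Nat.le_induction with
  | base => simp
  | succ T hT ih =>
    have hS : 0 ≤ ∑ t ∈ Ico T₀ T, c t := sum_nonneg fun t _ => hc t
    calc b (T + 1) ≤ (1 - a T) * b T + c T := hrec T hT
      _ ≤ (1 - a T) * (b T₀ * ∏ t ∈ Ico T₀ T, (1 - a t) + ∑ t ∈ Ico T₀ T, c t) + c T := by
        gcongr
        linarith [ha1 T hT]
      _ ≤ b T₀ * ∏ t ∈ Ico T₀ (T + 1), (1 - a t) + ∑ t ∈ Ico T₀ (T + 1), c t := by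
        rw [prod_Ico_succ_top hT, sum_Ico_succ_top hT]
        nlinarith [mul_nonneg (ha T) hS]

theorem tendsto_zero_of_le_one_sub_mul_add (hb : ∀ t, 0 ≤ b t) (ha : ∀ t, 0 ≤ a t)
    (hc : ∀ t, 0 ≤ c t) (ha1 : ∀ᶠ t in atTop, a t ≤ 1)
    (hdiv : Tendsto (fun n => ∑ t ∈ range n, a t) atTop atTop) (hcs : Summable c)
    (hrec : ∀ᶠ t in atTop, b (t + 1) ≤ (1 - a t) * b t + c t) :
    Tendsto b atTop (nhds 0) := by
  refine tendsto_order.2 ⟨fun ε hε => .of_forall fun t => hε.trans_le (hb t), fun ε hε => ?_⟩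
  obtain ⟨N, hN⟩ := eventually_atTop.1 (ha1.and hrec)
  obtain ⟨T₀, hNT₀, htail⟩ : ∃ T₀, N ≤ T₀ ∧ ∑' k, c (k + T₀) < ε / 2 :=
    ((eventually_ge_atTop N).and ((tendsto_sum_nat_add c).eventually_lt_const (half_pos hε))).exists
  have hexp : Tendsto (fun T => b T₀ * exp (-∑ t ∈ Ico T₀ T, a t)) atTop (nhds 0) := by
    simpa using (tendsto_exp_neg_atTop_nhds_zero.comp (tendsto_sum_Ico_atTop hdiv T₀)).const_mul
      (b T₀)
  filter_upwards [eventually_ge_atTop T₀, hexp.eventually_lt_const (half_pos hε)] with T hT hTexp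
  have hunroll := le_mul_prod_add_sum_of_le_one_sub_mul_add ha hc
    (fun t ht => (hN t (hNT₀.trans ht)).1) (fun t ht => (hN t (hNT₀.trans ht)).2) hT
  calc b T ≤ b T₀ * ∏ t ∈ Ico T₀ T, (1 - a t) + ∑ t ∈ Ico T₀ T, c t := hunroll
    _ ≤ b T₀ * exp (-∑ t ∈ Ico T₀ T, a t) + ∑' k, c (k + T₀) := by
      gcongr
      · exact hb T₀
      · exact prod_one_sub_le_exp_neg_sum fun t ht => (hN t (hNT₀.trans (mem_Ico.1 ht).1)).1
      · exact sum_Ico_le_tsum_nat_add hc hcs T₀ T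
    _ < ε / 2 + ε / 2 := add_lt_add hTexp htail
    _ = ε := add_halves ε

end Recursion

theorem pl_recursion_convergence_general
    (B η : ℕ → ℝ) (μ C α : ℝ) (t₁ : ℕ)
    (hμ : 0 < μ) (hC : 0 < C)
    (hB : ∀ t, 0 ≤ B t) (hη : ∀ t, 0 ≤ η t)
    (hηsmall : ∀ t, t₁ ≤ t → η t ≤ 1 / μ)
    (hdiv : Tendsto (fun T => ∑ t ∈ Finset.Icc 1 T, η t) atTop atTop)
    (hsum : Summable (fun t => η t ^ (1 + α)))
    (hrec : ∀ t, t₁ ≤ t → B (t + 1) ≤ (1 - μ * η t) * B t + C * η t ^ (1 + α)) :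
    Tendsto B atTop (nhds 0) := by
  have hdiv_range : Tendsto (fun n => ∑ t ∈ range n, η t) atTop atTop :=
    (tendsto_add_atTop_iff_nat 1).1 <| tendsto_atTop_mono (fun T =>
      sum_le_sum_of_subset_of_nonneg (fun t ht => by simp only [mem_Icc, mem_range] at ht ⊢; omega) fun t _ _ => hη t) hdiv
  exact tendsto_zero_of_le_one_sub_mul_add hB (fun t => mul_nonneg hμ.le (hη t))
    (fun t => mul_nonneg hC.le (rpow_nonneg (hη t) _))
    (eventually_atTop.2 ⟨t₁, fun t ht => (le_div_iff₀' hμ).1 (hηsmall t ht)⟩)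
    (by simpa only [← mul_sum] using hdiv_range.const_mul_atTop hμ)
    (hsum.mul_left C) (eventually_atTop.2 ⟨t₁, hrec⟩)

theorem pl_recursion_convergence
    (B η : ℕ → ℝ) (μ C α : ℝ) (t₁ : ℕ)
    (hμ : 0 < μ) (hC : 0 < C) (hα : 0 < α) (hα1 : α ≤ 1)
    (hB : ∀ t, 0 ≤ B t) (hη : ∀ t, 0 ≤ η t)
    (hηsmall : ∀ t, t₁ ≤ t → η t ≤ 1 / μ)
    (hlim : Tendsto η atTop (nhds 0))
    (hdiv : Tendsto (fun T => ∑ t ∈ Finset.Icc 1 T, η t) atTop atTop)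
    (hsum : Summable (fun t => η t ^ (1 + α)))
    (hrec : ∀ t, t₁ ≤ t → B (t + 1) ≤ (1 - μ * η t) * B t + C * η t ^ (1 + α)) :
    Tendsto B atTop (nhds 0) :=
  pl_recursion_convergence_general B η μ C α t₁ hμ hC hB hη hηsmall hdiv hsum hrec
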